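/- Let β₀ < 1 < βₙ (n ≠ 0) and suppose (φₙ) solves 2(1+λ)βₙ(σ+λ+βₙ)φₙ = Rk((βₙ₊₁−1)φₙ₊₁ − (βₙ₋₁−1)φₙ₋₁) with σ + λ + β₀ > 0, R, k > 0, λ ≥ 0, and ∑ βₙ²φₙ² < ∞, φ not identically zero. Then φ₀ ≠ 0. -/

import Mathlib

/-!
Multiply the recurrence by `aₙ = (βₙ - 1) φₙ`. The right-hand side becomes
`R k aₙ (aₙ₊₁ - aₙ₋₁)`, whose sum over `ℤ` vanishes because `∑ aₙ aₙ₊₁ = ∑ aₙ aₙ₋₁` after a shift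
of index. Hence `∑ 2(1+λ) βₙ (σ+λ+βₙ)(βₙ-1) φₙ² = 0`. If `φ₀ = 0`, every remaining term has a
positive weight, so `φ = 0`.
-/

open Filter

theorem Summable.mul_of_summable_sq {ι : Type*} {f g : ι → ℝ} (hf : Summable fun i => f i ^ 2)
    (hg : Summable fun i => g i ^ 2) : Summable fun i => f i * g i :=
  .of_norm_bounded ((hf.add hg).div_const 2) fun i => by
    rw [Real.norm_eq_abs, abs_mul, ← sq_abs (f i), ← sq_abs (g i)]
    linarith [two_mul_le_add_sq |f i| |g i|]

theorem Summable.sq_sub_one_mul {ι : Type*} {β φ : ι → ℝ} (hβ : ∀ᶠ i in cofinite, 1 ≤ β i)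
    (h : Summable fun i => β i ^ 2 * φ i ^ 2) : Summable fun i => ((β i - 1) * φ i) ^ 2 :=
  .of_norm_bounded_eventually h <| hβ.mono fun i hi => by
    rw [Real.norm_eq_abs, abs_sq, mul_pow]
    gcongr; linarith

theorem hasSum_mul_sub_shift_zero {a : ℤ → ℝ} (ha : Summable fun n => a n ^ 2) :
    HasSum (fun n => a n * (a (n + 1) - a (n - 1))) 0 := by
  have hfwd : Summable fun n => a n * a (n + 1) :=
    ha.mul_of_summable_sq ((Equiv.addRight 1).summable_iff (f := fun n => a n ^ 2) |>.2 ha)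
  have hbwd : Summable fun n => a n * a (n - 1) :=
    ha.mul_of_summable_sq ((Equiv.subRight 1).summable_iff (f := fun n => a n ^ 2) |>.2 ha)
  have hreindex : ∑' n, a n * a (n - 1) = ∑' n, a n * a (n + 1) := by
    rw [← (Equiv.addRight (1 : ℤ)).tsum_eq]
    simp only [Equiv.coe_addRight, add_sub_cancel_right, mul_comm]
  simpa [mul_sub, hreindex] using hfwd.hasSum.sub hbwd.hasSum

theorem eq_zero_of_hasSum_mul_sq_eq_zero {ι : Type*} {c φ : ι → ℝ} {i₀ : ι}
    (hc : ∀ i ≠ i₀, 0 < c i) (hφ : φ i₀ = 0) (h : HasSum (fun i => c i * φ i ^ 2) 0) : φ = 0 := by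
  have hnonneg (i : ι) : 0 ≤ c i * φ i ^ 2 := by
    rcases eq_or_ne i i₀ with rfl | hi
    · simp [hφ]
    · exact mul_nonneg (hc i hi).le (sq_nonneg _)
  have hzero := (hasSum_zero_iff_of_nonneg hnonneg).1 h
  funext i
  rcases eq_or_ne i i₀ with rfl | hi
  · exact hφ
  · simpa [(hc i hi).ne'] using congrFun hzero i

theorem stmt_19_general (k lam R σ : ℝ) (hlam : 0 ≤ lam)
    (β : ℤ → ℝ)
    (hβ0 : β 0 < 1) (hβn : ∀ n : ℤ, n ≠ 0 → 1 < β n)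
    (hσ : 0 < σ + lam + β 0)
    (φ : ℤ → ℝ) (hne : φ ≠ 0)
    (hsum : Summable (fun n : ℤ => (β n) ^ 2 * (φ n) ^ 2))
    (hrec : ∀ n : ℤ, 2 * (1 + lam) * β n * (σ + lam + β n) * φ n
      = R * k * ((β (n + 1) - 1) * φ (n + 1) - (β (n - 1) - 1) * φ (n - 1))) :
    φ 0 ≠ 0 := by
  intro hφ0
  set a : ℤ → ℝ := fun n => (β n - 1) * φ n
  have ha : Summable fun n => a n ^ 2 :=
    hsum.sq_sub_one_mul <| (eventually_cofinite_ne 0).mono fun n hn => (hβn n hn).le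
  have hidentity : HasSum
      (fun n => 2 * (1 + lam) * β n * (σ + lam + β n) * (β n - 1) * φ n ^ 2) 0 := by
    refine (mul_zero (R * k) ▸ (hasSum_mul_sub_shift_zero ha).mul_left (R * k)).congr_fun
      fun n => ?_
    linear_combination a n * hrec n
  refine hne (eq_zero_of_hasSum_mul_sq_eq_zero (fun n hn => ?_) hφ0 hidentity)
  have hβn1 : 1 < β n := hβn n hn
  have hσn : 0 < σ + lam + β n := by linarith
  have : 0 < β n - 1 := by linarith
  positivity

theorem stmt_19 (k lam R σ : ℝ) (N j : ℤ) (hk : 0 < k) (hN : 2 ≤ N)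
    (hj1 : 1 ≤ j) (hj2 : j ≤ N - 1) (hlam : 0 ≤ lam) (hR : 0 < R)
    (β : ℤ → ℝ) (hβ : ∀ n : ℤ, β n = k ^ 2 + ((n : ℝ) + (j : ℝ) / (2 * N)) ^ 2)
    (hβ0 : β 0 < 1) (hβn : ∀ n : ℤ, n ≠ 0 → 1 < β n)
    (hσ : 0 < σ + lam + β 0)
    (φ : ℤ → ℝ) (hne : φ ≠ 0)
    (hsum : Summable (fun n : ℤ => (β n) ^ 2 * (φ n) ^ 2))
    (hrec : ∀ n : ℤ, 2 * (1 + lam) * β n * (σ + lam + β n) * φ n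
      = R * k * ((β (n + 1) - 1) * φ (n + 1) - (β (n - 1) - 1) * φ (n - 1))) :
    φ 0 ≠ 0 :=
  stmt_19_general k lam R σ hlam β hβ0 hβn hσ φ hne hsum hrec
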